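/- The polynomial l2(z,w) = w + (9b/16) z² + (3b/8) z w + (b/16) w² is a Darboux factor with some polynomial cofactor of the system P(z,w) = z + (1/16)(21b z² - 6b z w + b w²), Q(z,w) = -w + (1/16)(-27b z² + 18b z w - 7b w²), for every b ∈ ℂ. -/

import Mathlib

open Complex

theorem hasDerivAt_quadratic {𝕜 : Type*} [NontriviallyNormedField 𝕜] (a b c x : 𝕜) :
    HasDerivAt (fun t => a + b * t + c * t ^ 2) (b + 2 * c * x) x :=
  ((((hasDerivAt_id x).const_mul b).const_add a).add ((hasDerivAt_pow 2 x).const_mul c)).congr_deriv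
    (by norm_num; ring)

theorem deriv_quadratic {𝕜 : Type*} [NontriviallyNormedField 𝕜] (a b c x : 𝕜) :
    deriv (fun t => a + b * t + c * t ^ 2) x = b + 2 * c * x :=
  (hasDerivAt_quadratic a b c x).deriv

/-- `l2 = w + (9b/16)z² + (3b/8)zw + (b/16)w²` is a Darboux factor of the system (P,Q),
for every `b ∈ ℂ`. -/
theorem stmt6 (b : ℂ) :
    ∃ K : MvPolynomial (Fin 2) ℂ, ∀ z w : ℂ,
      deriv (fun z' : ℂ => w + (9*b/16)*z'^2 + (3*b/8)*z'*w + (b/16)*w^2) z *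
        (z + (1/16)*(21*b*z^2 - 6*b*z*w + b*w^2)) +
      deriv (fun w' : ℂ => w' + (9*b/16)*z^2 + (3*b/8)*z*w' + (b/16)*w'^2) w *
        (-w + (1/16)*(-27*b*z^2 + 18*b*z*w - 7*b*w^2)) =
      (MvPolynomial.eval (fun i : Fin 2 => if i = 0 then z else w) K) *
        (w + (9*b/16)*z^2 + (3*b/8)*z*w + (b/16)*w^2) := by
  refine ⟨MvPolynomial.C (-1) + MvPolynomial.C (3*b/2) * MvPolynomial.X 0
    + MvPolynomial.C (-(b/2)) * MvPolynomial.X 1, fun z w => ?_⟩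
  have l2_in_z : (fun z' : ℂ => w + (9*b/16)*z'^2 + (3*b/8)*z'*w + (b/16)*w^2) =
      fun t => (w + (b/16)*w^2) + ((3*b/8)*w) * t + (9*b/16) * t^2 := by
    funext t; ring
  have l2_in_w : (fun w' : ℂ => w' + (9*b/16)*z^2 + (3*b/8)*z*w' + (b/16)*w'^2) =
      fun t => (9*b/16)*z^2 + (1 + (3*b/8)*z) * t + (b/16) * t^2 := by
    funext t; ring
  rw [l2_in_z, l2_in_w, deriv_quadratic, deriv_quadratic]
  simp only [MvPolynomial.eval_add, MvPolynomial.eval_mul, MvPolynomial.eval_C,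
    MvPolynomial.eval_X, Fin.isValue, if_pos, one_ne_zero, if_false]
  ring
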